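/- (Padded typing) If Γ ⊢ e : t in the tensor model language, then ⌈Γ⌉_M ⊢ e : ⌈t⌉_M, where ⌈·⌉_M rounds every tensor-type component up to the nearest multiple of M. -/

import Mathlib

/-- Rounding up to the nearest multiple of `M`. -/
noncomputable def roundUp (M d : ℕ) : ℕ := sInf {m : ℕ | ∃ n : ℕ, m = n * M ∧ d ≤ m}

/-- Tensor types are tuples of naturals. -/
abbrev Ty := List ℕ
/-- Multi-indices. -/
abbrev Index := List ℕ

/-- `IdxLe i t`: the multi-index `i` (with components in {1,2,…}) is bounded by `t`. -/
def IdxLe (i t : Index) : Prop :=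
  i.length = t.length ∧ ∀ l, l < t.length → 1 ≤ i.getD l 0 ∧ i.getD l 0 ≤ t.getD l 0

/-- Swap the `m`-th and `n`-th components (1-based). -/
def swapIdx (t : List ℕ) (m n : ℕ) : List ℕ :=
  (t.set (m-1) (t.getD (n-1) 0)).set (n-1) (t.getD (m-1) 0)

/-- Delete the `m`-th and `n`-th components (1-based, `m < n`). -/
def delete2 (t : List ℕ) (m n : ℕ) : List ℕ :=
  (t.eraseIdx (n-1)).eraseIdx (m-1)

/-- Insert value `l` at the `m`-th and `n`-th positions (1-based, `m < n`). -/
def insert2 (i : List ℕ) (m n l : ℕ) : List ℕ :=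
  (i.insertIdx (m-1) l).insertIdx (n-1) l

/-- Pad a tensor type componentwise. -/
noncomputable def padT (M : ℕ) (t : Ty) : Ty := t.map (roundUp M)

/-- The padding region of a type: indices within the padded bounds but not the original ones. -/
def PadReg (M : ℕ) (t : Ty) (i : Index) : Prop := ¬ IdxLe i t ∧ IdxLe i (padT M t)

inductive Op | add | sub | mul | div
deriving DecidableEq

/-- Expressions of the tensor model language. -/
inductive Expr
| var : String → Expr
| paren : Expr → Expr
| binop : Op → Expr → Expr → Expr
| prod : Expr → Expr → Expr
| trans : Expr → ℕ → ℕ → Expr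
| contr : Expr → ℕ → ℕ → Expr

/-- A static context maps identifiers to tensor types. -/
abbrev Ctx := String → Option Ty

/-- Componentwise padding of a static context. -/
noncomputable def padCtx (M : ℕ) (Γ : Ctx) : Ctx := fun x => (Γ x).map (padT M)

/-- The typing rules of the tensor model language. -/
inductive HasTy (Γ : Ctx) : Expr → Ty → Prop
| var {x t} : Γ x = some t → HasTy Γ (.var x) t
| paren {e t} : HasTy Γ e t → HasTy Γ (.paren e) t
| prod {e₀ e₁ t₀ t₁} : HasTy Γ e₀ t₀ → HasTy Γ e₁ t₁ → HasTy Γ (.prod e₀ e₁) (t₀ ++ t₁)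
| trans {e t m n} : HasTy Γ e t → 1 ≤ m → m < n → n ≤ t.length →
    HasTy Γ (.trans e m n) (swapIdx t m n)
| contr {e t m n} : HasTy Γ e t → 1 ≤ m → m < n → n ≤ t.length →
    t.getD (m-1) 0 = t.getD (n-1) 0 → HasTy Γ (.contr e m n) (delete2 t m n)
| elem {op e₀ e₁ t} : HasTy Γ e₀ t → HasTy Γ e₁ t → HasTy Γ (.binop op e₀ e₁) t
| smul {e₀ e₁ t} : HasTy Γ e₀ [] → HasTy Γ e₁ t → HasTy Γ (.binop .mul e₀ e₁) t
| sdiv {e₀ e₁ t} : HasTy Γ e₀ t → HasTy Γ e₁ [] → HasTy Γ (.binop .div e₀ e₁) t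

/-- Syntax-directed type inference. -/
def inferTy (Γ : Ctx) : Expr → Option Ty
| .var x => Γ x
| .paren e => inferTy Γ e
| .prod e₀ e₁ => do pure ((← inferTy Γ e₀) ++ (← inferTy Γ e₁))
| .trans e m n => do
    let t ← inferTy Γ e
    if 1 ≤ m ∧ m < n ∧ n ≤ t.length then pure (swapIdx t m n) else none
| .contr e m n => do
    let t ← inferTy Γ e
    if 1 ≤ m ∧ m < n ∧ n ≤ t.length ∧ t.getD (m-1) 0 = t.getD (n-1) 0 then
      pure (delete2 t m n) else none
| .binop op e₀ e₁ => do
    let t₀ ← inferTy Γ e₀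
    let t₁ ← inferTy Γ e₁
    if t₀ = t₁ then pure t₀
    else if op = .mul ∧ t₀ = [] then pure t₁
    else if op = .div ∧ t₁ = [] then pure t₀
    else none

/-- The value domain `𝕍 ∪ {•}`: `none` is the undefined value `•`. -/
abbrev W (V : Type) := Option V

/-- Extended addition: `•` is absorbing. -/
def wadd {V : Type} [Add V] : W V → W V → W V
| some a, some b => some (a + b)
| _, _ => none

def wsub {V : Type} [Sub V] : W V → W V → W V
| some a, some b => some (a - b)
| _, _ => none

def wmul {V : Type} [Mul V] : W V → W V → W V
| some a, some b => some (a * b)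
| _, _ => none

/-- Controlled division on `𝕍 ∪ {•}`: `0/0 = 0`, `0/• = 0`, otherwise `•` absorbs
    and division by zero is undefined. -/
def wdiv {V : Type} [Field V] [DecidableEq V] : W V → W V → W V
| some a, some b => if b = 0 then (if a = 0 then some 0 else none) else some (a / b)
| some a, none => if a = 0 then some 0 else none
| none, _ => none

def applyOp {V : Type} [Field V] [DecidableEq V] : Op → W V → W V → W V
| .add => wadd
| .sub => wsub
| .mul => wmul
| .div => wdiv

/-- A dynamic store: a partial map from subscripted identifiers to `𝕍 ∪ {•}`. -/
abbrev Store (V : Type) := String × Index → Option (W V)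

/-- Denotational semantics of expression evaluation; `none` means evaluation is stuck
    (not well-defined), `some w` means the result is the value `w ∈ 𝕍 ∪ {•}`. -/
def eval {V : Type} [Field V] [DecidableEq V] (Γ : Ctx) (μ : Store V) :
    Expr → Index → Option (W V)
| .var x, i => μ (x, i)
| .paren e, i => eval Γ μ e i
| .prod e₀ e₁, i => do
    let t₀ ← inferTy Γ e₀
    let v₀ ← eval Γ μ e₀ (i.take t₀.length)
    let v₁ ← eval Γ μ e₁ (i.drop t₀.length)
    pure (wmul v₀ v₁)
| .trans e m n, i => eval Γ μ e (swapIdx i m n)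
| .contr e m n, i => do
    let t ← inferTy Γ e
    let vs ← (List.range (t.getD (m-1) 0)).mapM (fun l => eval Γ μ e (insert2 i m n (l+1)))
    pure (vs.foldl wadd (some 0))
| .binop op e₀ e₁, i => do
    let t₀ ← inferTy Γ e₀
    let t₁ ← inferTy Γ e₁
    if op = .mul ∧ t₀ = [] then
      let v₀ ← eval Γ μ e₀ []
      let v₁ ← eval Γ μ e₁ i
      pure (wmul v₀ v₁)
    else if op = .div ∧ t₁ = [] then
      let v₀ ← eval Γ μ e₀ i
      let v₁ ← eval Γ μ e₁ []
      pure (wdiv v₀ v₁)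
    else
      let v₀ ← eval Γ μ e₀ i
      let v₁ ← eval Γ μ e₁ i
      pure (applyOp op v₀ v₁)

open Classical

/-- The unique initial store determined by `Γ` and the ambient values `v`. -/
noncomputable def initStore {V : Type} (Γ : Ctx) (v : String → Index → W V) : Store V :=
  fun p => match Γ p.1 with
  | some t => if IdxLe p.2 t then some (v p.1 p.2) else none
  | none => none

/-- The unique padded initial store: values on the original domain, zero on padding. -/
noncomputable def initStoreP {V : Type} [Zero V] (M : ℕ) (Γ : Ctx)
    (v : String → Index → W V) : Store V :=
  fun p => match Γ p.1 with
  | some t =>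
      if IdxLe p.2 t then some (v p.1 p.2)
      else if IdxLe p.2 (padT M t) then some (some 0)
      else none
  | none => none

/-- A statement `x = e`. -/
abbrev Stmt := String × Expr

/-- Well-formedness of a statement list in context `Γ`. -/
def Ok (Γ : Ctx) (ss : List Stmt) : Prop :=
  ∀ s ∈ ss, ∃ t, Γ s.1 = some t ∧ HasTy Γ s.2 t

/-- Evaluation of a single assignment statement (rule ev-stmt). -/
inductive StepStmt {V : Type} [Field V] [DecidableEq V] (Γ : Ctx) :
    Store V → Stmt → Store V → Prop
| mk {μ : Store V} {x e t} :
    Γ x = some t →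
    (∀ i, IdxLe i t → μ (x, i) ≠ none) →
    (∀ i, IdxLe i t → (eval Γ μ e i).isSome) →
    StepStmt Γ μ (x, e)
      (fun p => if p.1 = x ∧ IdxLe p.2 t then eval Γ μ e p.2 else μ p)

/-- Evaluation of a statement sequence. -/
inductive StepStmts {V : Type} [Field V] [DecidableEq V] (Γ : Ctx) :
    Store V → List Stmt → Store V → Prop
| nil {μ} : StepStmts Γ μ [] μ
| cons {μ μ' μ'' s ss} : StepStmt Γ μ s μ' → StepStmts Γ μ' ss μ'' →
    StepStmts Γ μ (s :: ss) μ''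

/-- Evaluation of a single assignment statement with a padded store (rule ev-pad-stmt). -/
inductive StepStmtP {V : Type} [Field V] [DecidableEq V] (M : ℕ) (Γ : Ctx) :
    Store V → Stmt → Store V → Prop
| mk {μ : Store V} {x e t} :
    Γ x = some t →
    (∀ i, IdxLe i (padT M t) → μ (x, i) ≠ none) →
    (∀ i, IdxLe i (padT M t) → (eval (padCtx M Γ) μ e i).isSome) →
    StepStmtP M Γ μ (x, e)
      (fun p => if p.1 = x ∧ IdxLe p.2 (padT M t) then eval (padCtx M Γ) μ e p.2 else μ p)

inductive StepStmtsP {V : Type} [Field V] [DecidableEq V] (M : ℕ) (Γ : Ctx) :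
    Store V → List Stmt → Store V → Prop
| nil {μ} : StepStmtsP M Γ μ [] μ
| cons {μ μ' μ'' s ss} : StepStmtP M Γ μ s μ' → StepStmtsP M Γ μ' ss μ'' →
    StepStmtsP M Γ μ (s :: ss) μ''

/- Padding a type is `List.map (roundUp M)`, which commutes with concatenation, swapping and
deleting components, preserves lengths and the empty type, and preserves equalities between
components; hence each typing rule survives padding. -/

theorem roundUp_zero (M : ℕ) : roundUp M 0 = 0 :=
  Nat.eq_zero_of_le_zero (Nat.sInf_le ⟨0, by simp, le_rfl⟩)

theorem padT_append (M : ℕ) (t₀ t₁ : Ty) : padT M (t₀ ++ t₁) = padT M t₀ ++ padT M t₁ :=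
  List.map_append

@[simp]
theorem length_padT (M : ℕ) (t : Ty) : (padT M t).length = t.length :=
  List.length_map _

-- `roundUp M 0 = 0` makes the default value `0` of `getD` compatible with padding.
theorem getD_padT (M : ℕ) (t : Ty) (k : ℕ) :
    (padT M t).getD k 0 = roundUp M (t.getD k 0) := by
  simpa only [padT, roundUp_zero] using List.getD_map (l := t) (d := 0) (n := k) (roundUp M)

theorem padT_swapIdx (M : ℕ) (t : Ty) (m n : ℕ) :
    padT M (swapIdx t m n) = swapIdx (padT M t) m n := by
  simp only [swapIdx, getD_padT]
  simp only [padT, List.map_set]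

theorem padT_delete2 (M : ℕ) (t : Ty) (m n : ℕ) :
    padT M (delete2 t m n) = delete2 (padT M t) m n := by
  simp only [delete2, padT, List.eraseIdx_map]

theorem padded_typing_general (M : ℕ) {Γ : Ctx} {e : Expr} {t : Ty}
    (h : HasTy Γ e t) : HasTy (padCtx M Γ) e (padT M t) := by
  induction h with
  | var hx => exact .var (by rw [padCtx, hx, Option.map_some])
  | paren _ ih => exact .paren ih
  | prod _ _ ih₀ ih₁ => exact padT_append M _ _ ▸ .prod ih₀ ih₁
  | trans _ hm hmn hn ih =>
      exact padT_swapIdx M _ _ _ ▸ .trans ih hm hmn (by rwa [length_padT])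
  | contr _ hm hmn hn heq ih =>
      exact padT_delete2 M _ _ _ ▸ .contr ih hm hmn (by rwa [length_padT])
        (by rw [getD_padT, getD_padT, heq])
  | elem _ _ ih₀ ih₁ => exact .elem ih₀ ih₁
  | smul _ _ ih₀ ih₁ => exact .smul ih₀ ih₁
  | sdiv _ _ ih₀ ih₁ => exact .sdiv ih₀ ih₁

/-- **Padded typing**: if `Γ ⊢ e : t`, then `⌈Γ⌉_M ⊢ e : ⌈t⌉_M`. -/
theorem padded_typing (M : ℕ) (hM : 1 ≤ M) {Γ : Ctx} {e : Expr} {t : Ty}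
    (h : HasTy Γ e t) : HasTy (padCtx M Γ) e (padT M t) :=
  padded_typing_general M h
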